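/- Let r be a real number. Define f(x,y) = (√(1 − 2√x) + √y)^(−2) on the open set U = {(x,y) ∈ ℝ² : 0 < x, 2√x < 1, 0 < y}. Then Φ := f^r satisfies both Horn differential equations of the Horn function H₄(r, r+1/2, 1/2, 1/2): (θ_x(θ_x − 1/2) − x(2θ_x + θ_y + r)(2θ_x + θ_y + r + 1))Φ = 0 and (θ_y(θ_y − 1/2) − y(2θ_x + θ_y + r)(θ_y + r + 1/2))Φ = 0 at every point of U. -/

import Mathlib

/-!
With `s = √x`, `t = √y`, `u = √(1 - 2s)` and `g = u + t` we have `Φ = g^(-2r)`, and the Euler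
operators act by `θ_x s = s/2`, `θ_x u = -s/(2u)`, `θ_y t = t/2`. Hence `θ_x Φ = Φ · rs/(ug)` and
`θ_y Φ = -Φ · rt/g`, and applying the product rule once more turns both Horn operators into `Φ`
times a rational function of `s, t, u`, which vanishes identically once `s = (1 - u²)/2`.
-/

/-- Euler operator `θ_x = x·∂/∂x` on functions of two real variables. -/
noncomputable def thetaX (f : ℝ × ℝ → ℝ) : ℝ × ℝ → ℝ := fun p => p.1 * fderiv ℝ f p (1, 0)

/-- Euler operator `θ_y = y·∂/∂y` on functions of two real variables. -/
noncomputable def thetaY (f : ℝ × ℝ → ℝ) : ℝ × ℝ → ℝ := fun p => p.2 * fderiv ℝ f p (0, 1)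

/-- The first-order operator `a·θ_x + b·θ_y + c`. -/
noncomputable def eulerOp (a b c : ℝ) (f : ℝ × ℝ → ℝ) : ℝ × ℝ → ℝ :=
  fun p => a * thetaX f p + b * thetaY f p + c * f p

/-- `f(x,y) = (√(1 − 2√x) + √y)^(−2)`. -/
noncomputable def fFun (p : ℝ × ℝ) : ℝ :=
  (Real.sqrt (1 - 2 * Real.sqrt p.1) + Real.sqrt p.2) ^ (-2 : ℝ)

open Filter Topology

def HasEulerDerivAt (f : ℝ × ℝ → ℝ) (a b : ℝ) (p : ℝ × ℝ) : Prop :=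
  ∃ f' : ℝ × ℝ →L[ℝ] ℝ, HasFDerivAt f f' p ∧ p.1 * f' (1, 0) = a ∧ p.2 * f' (0, 1) = b

theorem hasEulerDerivAt_fst (p : ℝ × ℝ) : HasEulerDerivAt Prod.fst p.1 0 p :=
  ⟨_, hasFDerivAt_fst, by simp, by simp⟩

theorem hasEulerDerivAt_snd (p : ℝ × ℝ) : HasEulerDerivAt Prod.snd 0 p.2 p :=
  ⟨_, hasFDerivAt_snd, by simp, by simp⟩

namespace HasEulerDerivAt

variable {f g : ℝ × ℝ → ℝ} {a b c d : ℝ} {p : ℝ × ℝ}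

theorem thetaX_eq (h : HasEulerDerivAt f a b p) : thetaX f p = a := by
  obtain ⟨f', hf, ha, -⟩ := h
  rw [thetaX, hf.fderiv, ha]

theorem thetaY_eq (h : HasEulerDerivAt f a b p) : thetaY f p = b := by
  obtain ⟨f', hf, -, hb⟩ := h
  rw [thetaY, hf.fderiv, hb]

theorem eulerOp_apply (h : HasEulerDerivAt f a b p) (α β γ : ℝ) :
    eulerOp α β γ f p = α * a + β * b + γ * f p := by
  rw [eulerOp, h.thetaX_eq, h.thetaY_eq]

theorem congr_deriv (h : HasEulerDerivAt f a b p) (ha : a = c) (hb : b = d) :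
    HasEulerDerivAt f c d p :=
  ha ▸ hb ▸ h

theorem congr_of_eventuallyEq (h : HasEulerDerivAt f a b p) (hg : g =ᶠ[𝓝 p] f) :
    HasEulerDerivAt g a b p :=
  let ⟨f', hf, ha, hb⟩ := h
  ⟨f', hf.congr_of_eventuallyEq hg, ha, hb⟩

theorem add (hf : HasEulerDerivAt f a b p) (hg : HasEulerDerivAt g c d p) :
    HasEulerDerivAt (fun q => f q + g q) (a + c) (b + d) p := by
  obtain ⟨f', hf, rfl, rfl⟩ := hf
  obtain ⟨g', hg, rfl, rfl⟩ := hg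
  exact ⟨f' + g', hf.add hg, by simp [mul_add], by simp [mul_add]⟩

theorem const_mul (hf : HasEulerDerivAt f a b p) (k : ℝ) :
    HasEulerDerivAt (fun q => k * f q) (k * a) (k * b) p := by
  obtain ⟨f', hf, rfl, rfl⟩ := hf
  exact ⟨k • f', hf.const_mul k, by simp; ring, by simp; ring⟩

theorem const_sub (hf : HasEulerDerivAt f a b p) (k : ℝ) :
    HasEulerDerivAt (fun q => k - f q) (-a) (-b) p := by
  obtain ⟨f', hf, rfl, rfl⟩ := hf
  exact ⟨-f', hf.const_sub k, by simp, by simp⟩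

theorem mul (hf : HasEulerDerivAt f a b p) (hg : HasEulerDerivAt g c d p) :
    HasEulerDerivAt (fun q => f q * g q) (a * g p + f p * c) (b * g p + f p * d) p := by
  obtain ⟨f', hf, rfl, rfl⟩ := hf
  obtain ⟨g', hg, rfl, rfl⟩ := hg
  exact ⟨f p • g' + g p • f', hf.mul hg, by simp; ring, by simp; ring⟩

theorem inv (hf : HasEulerDerivAt f a b p) (h0 : f p ≠ 0) :
    HasEulerDerivAt (fun q => (f q)⁻¹) (-a / f p ^ 2) (-b / f p ^ 2) p := by
  obtain ⟨f', hf, rfl, rfl⟩ := hf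
  exact ⟨_, (hasDerivAt_inv h0).comp_hasFDerivAt p hf, by simp; ring, by simp; ring⟩

theorem div (hf : HasEulerDerivAt f a b p) (hg : HasEulerDerivAt g c d p) (h0 : g p ≠ 0) :
    HasEulerDerivAt (fun q => f q / g q) ((a * g p - f p * c) / g p ^ 2)
      ((b * g p - f p * d) / g p ^ 2) p := by
  convert hf.mul (hg.inv h0) using 1 <;> field_simp <;> ring

theorem sqrt (hf : HasEulerDerivAt f a b p) (h0 : f p ≠ 0) :
    HasEulerDerivAt (fun q => √(f q)) (a / (2 * √(f p))) (b / (2 * √(f p))) p := by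
  obtain ⟨f', hf, rfl, rfl⟩ := hf
  exact ⟨_, hf.sqrt h0, by simp; ring, by simp; ring⟩

theorem rpow_const (hf : HasEulerDerivAt f a b p) (h0 : f p ≠ 0) (c : ℝ) :
    HasEulerDerivAt (fun q => f q ^ c) (c * f p ^ (c - 1) * a) (c * f p ^ (c - 1) * b) p := by
  obtain ⟨f', hf, rfl, rfl⟩ := hf
  exact ⟨_, hf.rpow_const (Or.inl h0), by simp; ring, by simp; ring⟩

theorem eulerOp {Φ A B : ℝ × ℝ → ℝ} {aₓ a_y bₓ b_y : ℝ}
    (hΦ : ∀ᶠ q in 𝓝 p, HasEulerDerivAt Φ (A q) (B q) q)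
    (hA : HasEulerDerivAt A aₓ a_y p) (hB : HasEulerDerivAt B bₓ b_y p) (α β γ : ℝ) :
    HasEulerDerivAt (eulerOp α β γ Φ) (α * aₓ + β * bₓ + γ * A p)
      (α * a_y + β * b_y + γ * B p) p :=
  (((hA.const_mul α).add (hB.const_mul β)).add (hΦ.self_of_nhds.const_mul γ)).congr_of_eventuallyEq
    (hΦ.mono fun _ hq => hq.eulerOp_apply α β γ)

end HasEulerDerivAt

namespace Horn4

def U : Set (ℝ × ℝ) := {p | 0 < p.1 ∧ 2 * √p.1 < 1 ∧ 0 < p.2}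

noncomputable def u (p : ℝ × ℝ) : ℝ := √(1 - 2 * √p.1)

noncomputable def g (p : ℝ × ℝ) : ℝ := u p + √p.2

noncomputable def phi (r : ℝ) (p : ℝ × ℝ) : ℝ := g p ^ (-2 * r)

noncomputable def logThetaX (r : ℝ) (p : ℝ × ℝ) : ℝ := r * √p.1 / (u p * g p)

noncomputable def logThetaY (r : ℝ) (p : ℝ × ℝ) : ℝ := -r * √p.2 / g p

theorem isOpen_U : IsOpen U :=
  (isOpen_lt continuous_const continuous_fst).inter
    ((isOpen_lt (continuous_const.mul (Real.continuous_sqrt.comp continuous_fst))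
      continuous_const).inter (isOpen_lt continuous_const continuous_snd))

theorem fFun_rpow (r : ℝ) : (fun p => fFun p ^ r) = phi r := by
  funext p
  show (g p ^ (-2 : ℝ)) ^ r = g p ^ (-2 * r)
  rw [← Real.rpow_mul (show 0 ≤ g p from add_nonneg (Real.sqrt_nonneg _) (Real.sqrt_nonneg _))]

variable (r : ℝ) {p : ℝ × ℝ}

theorem sqrt_snd_pos (hp : p ∈ U) : 0 < √p.2 := Real.sqrt_pos.2 hp.2.2

theorem one_sub_two_sqrt_pos (hp : p ∈ U) : 0 < 1 - 2 * √p.1 := by linarith [hp.2.1]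

theorem u_pos (hp : p ∈ U) : 0 < u p := Real.sqrt_pos.2 (one_sub_two_sqrt_pos hp)

theorem u_sq (hp : p ∈ U) : u p ^ 2 = 1 - 2 * √p.1 := Real.sq_sqrt (one_sub_two_sqrt_pos hp).le

theorem g_pos (hp : p ∈ U) : 0 < g p := add_pos (u_pos hp) (sqrt_snd_pos hp)

theorem hasEulerDerivAt_sqrt_fst (hx : 0 < p.1) :
    HasEulerDerivAt (fun q => √q.1) (√p.1 / 2) 0 p := by
  refine ((hasEulerDerivAt_fst p).sqrt hx.ne').congr_deriv ?_ (by simp)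
  have := Real.sqrt_pos.2 hx
  field_simp
  exact (Real.sq_sqrt hx.le).symm

theorem hasEulerDerivAt_sqrt_snd (hy : 0 < p.2) :
    HasEulerDerivAt (fun q => √q.2) 0 (√p.2 / 2) p := by
  refine ((hasEulerDerivAt_snd p).sqrt hy.ne').congr_deriv (by simp) ?_
  have := Real.sqrt_pos.2 hy
  field_simp
  exact (Real.sq_sqrt hy.le).symm

theorem hasEulerDerivAt_u (hp : p ∈ U) :
    HasEulerDerivAt u (-(√p.1 / (2 * u p))) 0 p :=
  ((((hasEulerDerivAt_sqrt_fst hp.1).const_mul 2).const_sub 1).sqrt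
    (one_sub_two_sqrt_pos hp).ne').congr_deriv (by unfold u; ring) (by simp)

theorem hasEulerDerivAt_g (hp : p ∈ U) :
    HasEulerDerivAt g (-(√p.1 / (2 * u p))) (√p.2 / 2) p :=
  ((hasEulerDerivAt_u hp).add (hasEulerDerivAt_sqrt_snd hp.2.2)).congr_deriv
    (add_zero _) (zero_add _)

theorem hasEulerDerivAt_phi (hp : p ∈ U) :
    HasEulerDerivAt (phi r) (phi r p * logThetaX r p) (phi r p * logThetaY r p) p := by
  have hg := g_pos hp
  have hu := u_pos hp
  refine ((hasEulerDerivAt_g hp).rpow_const hg.ne' (-2 * r)).congr_deriv ?_ ?_ <;>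
  · rw [Real.rpow_sub_one hg.ne']
    simp only [phi, logThetaX, logThetaY]
    field_simp

theorem hasEulerDerivAt_logThetaX (hp : p ∈ U) :
    HasEulerDerivAt (logThetaX r)
      (logThetaX r p * (1 / 2 + √p.1 / (2 * u p ^ 2) + √p.1 / (2 * u p * g p)))
      (-(logThetaX r p * √p.2 / (2 * g p))) p := by
  have := u_pos hp
  have := g_pos hp
  refine (((hasEulerDerivAt_sqrt_fst hp.1).const_mul r).div
    ((hasEulerDerivAt_u hp).mul (hasEulerDerivAt_g hp)) (by positivity)).congr_deriv ?_ ?_ <;>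
  · rw [logThetaX]
    field_simp
    ring

theorem hasEulerDerivAt_logThetaY (hp : p ∈ U) :
    HasEulerDerivAt (logThetaY r) (logThetaY r p * √p.1 / (2 * u p * g p))
      (logThetaY r p * (1 / 2 - √p.2 / (2 * g p))) p := by
  have := u_pos hp
  have := g_pos hp
  refine (((hasEulerDerivAt_sqrt_snd hp.2.2).const_mul (-r)).div (hasEulerDerivAt_g hp)
    (by positivity)).congr_deriv ?_ ?_ <;>
  · rw [logThetaY]
    field_simp
    ring

theorem hasEulerDerivAt_eulerOp_phi (hp : p ∈ U) (α β γ : ℝ) :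
    HasEulerDerivAt (eulerOp α β γ (phi r))
      (phi r p * (α * (logThetaX r p * logThetaX r p
          + logThetaX r p * (1 / 2 + √p.1 / (2 * u p ^ 2) + √p.1 / (2 * u p * g p)))
        + β * (logThetaX r p * logThetaY r p + logThetaY r p * √p.1 / (2 * u p * g p))
        + γ * logThetaX r p))
      (phi r p * (α * (logThetaY r p * logThetaX r p - logThetaX r p * √p.2 / (2 * g p))
        + β * (logThetaY r p * logThetaY r p + logThetaY r p * (1 / 2 - √p.2 / (2 * g p)))
        + γ * logThetaY r p)) p := by
  have hev : ∀ᶠ q in 𝓝 p, HasEulerDerivAt (phi r) (phi r q * logThetaX r q)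
      (phi r q * logThetaY r q) q :=
    (isOpen_U.eventually_mem hp).mono fun q hq => hasEulerDerivAt_phi r hq
  have hΦ := hasEulerDerivAt_phi r hp
  exact (HasEulerDerivAt.eulerOp hev (hΦ.mul (hasEulerDerivAt_logThetaX r hp))
    (hΦ.mul (hasEulerDerivAt_logThetaY r hp)) α β γ).congr_deriv (by ring) (by ring)

end Horn4

open Horn4 in
/-- `Φ = f^r`, with `f(x,y) = (√(1 − 2√x) + √y)^(−2)`, satisfies both Horn
equations of `H₄(r, r+1/2, 1/2, 1/2)` on `U = {x > 0, 2√x < 1, y > 0}`. -/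
theorem stmt_13 (r : ℝ) (Φ : ℝ × ℝ → ℝ) (hΦ : Φ = fun p => fFun p ^ r) :
    ∀ p : ℝ × ℝ, 0 < p.1 → 2 * Real.sqrt p.1 < 1 → 0 < p.2 →
      thetaX (eulerOp 1 0 (-(1/2)) Φ) p
          - p.1 * eulerOp 2 1 r (eulerOp 2 1 (r + 1) Φ) p = 0 ∧
      thetaY (eulerOp 0 1 (-(1/2)) Φ) p
          - p.2 * eulerOp 2 1 r (eulerOp 0 1 (r + 1/2) Φ) p = 0 := by
  rw [hΦ, fFun_rpow]
  intro p hx h1 hy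
  have hp : p ∈ U := ⟨hx, h1, hy⟩
  have hphi := hasEulerDerivAt_phi r hp
  have hE := hasEulerDerivAt_eulerOp_phi r hp
  rw [(hE 1 0 _).thetaX_eq, (hE 2 1 _).eulerOp_apply, hphi.eulerOp_apply,
    (hE 0 1 _).thetaY_eq, (hE 0 1 _).eulerOp_apply, hphi.eulerOp_apply]
  have hx' : p.1 = √p.1 ^ 2 := (Real.sq_sqrt hx.le).symm
  have hy' : p.2 = √p.2 ^ 2 := (Real.sq_sqrt hy.le).symm
  have hs : √p.1 = (1 - u p ^ 2) / 2 := by linarith [u_sq hp]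
  have ht := sqrt_snd_pos hp
  have hu := u_pos hp
  have hg := g_pos hp
  simp only [logThetaX, logThetaY, g] at hg ⊢
  generalize √p.1 = s at hx' hs ⊢
  generalize √p.2 = t at hy' ht hg ⊢
  subst hs
  rw [hx', hy']
  constructor <;> field_simp <;> ring
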